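/- Let Z = ℝ⁴ \ {0}, U = {z ∈ Z : M₁₂(z) ≠ 0}. Then at every point of U the differentials dM₁₂, dA₁, dA₂ of the Kepler integrals of motion are linearly independent, i.e., dM₁₂ ∧ dA₁ ∧ dA₂ ≠ 0 on U. -/

import Mathlib

noncomputable section

/-- Partial derivative of `f : ℝ⁴ → ℝ` in the `i`-th coordinate direction.
Coordinates: `(q₁,q₂,p₁,p₂) = (z 0, z 1, z 2, z 3)`. -/
def pd (f : (Fin 4 → ℝ) → ℝ) (i : Fin 4) (z : Fin 4 → ℝ) : ℝ :=
  fderiv ℝ f z (Pi.single i 1)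

/-- Canonical Poisson bracket `{f,g} = Σᵢ (∂f/∂pᵢ ∂g/∂qᵢ - ∂f/∂qᵢ ∂g/∂pᵢ)`. -/
def pb (f g : (Fin 4 → ℝ) → ℝ) (z : Fin 4 → ℝ) : ℝ :=
  pd f 2 z * pd g 0 z - pd f 0 z * pd g 2 z
  + pd f 3 z * pd g 1 z - pd f 1 z * pd g 3 z

/-- `p² = p₁² + p₂²`. -/
def psq (z : Fin 4 → ℝ) : ℝ := (z 2)^2 + (z 3)^2

/-- `(p,q) = p₁q₁ + p₂q₂`. -/
def pdotq (z : Fin 4 → ℝ) : ℝ := z 2 * z 0 + z 3 * z 1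

/-- `r = √(q₁² + q₂²)`. -/
def rr (z : Fin 4 → ℝ) : ℝ := Real.sqrt ((z 0)^2 + (z 1)^2)

/-- The Kepler Hamiltonian `H = p²/2 - 1/r`. -/
def keplerH (z : Fin 4 → ℝ) : ℝ := psq z / 2 - 1 / rr z

/-- Angular momentum `M₁₂ = q₁p₂ - q₂p₁`. -/
def angM (z : Fin 4 → ℝ) : ℝ := z 0 * z 3 - z 1 * z 2

/-- First Runge–Lenz component `A₁ = q₁p² - p₁(p,q) - q₁/r`. -/
def rlA1 (z : Fin 4 → ℝ) : ℝ := z 0 * psq z - z 2 * pdotq z - z 0 / rr z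

/-- Second Runge–Lenz component `A₂ = q₂p² - p₂(p,q) - q₂/r`. -/
def rlA2 (z : Fin 4 → ℝ) : ℝ := z 1 * psq z - z 3 * pdotq z - z 1 / rr z

end

/-! Since `A₁ = p₂ M₁₂ - q₁/r` and `A₂ = -p₁ M₁₂ - q₂/r`, and `qᵢ/r` depends only on `q` and is
invariant under scaling of `q`, pairing `dM₁₂, dA₁, dA₂` with `∂/∂p₁`, `∂/∂p₂` and the radial
field `q₁ ∂/∂q₁ + q₂ ∂/∂q₂` kills every contribution of `qᵢ/r`. The resulting `3 × 3` matrix has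
determinant `M₁₂³`, which is nonzero on `U`. -/

theorem linearIndependent_of_det_apply_ne_zero {𝕜 E ι : Type*} [NontriviallyNormedField 𝕜]
    [NormedAddCommGroup E] [NormedSpace 𝕜 E] [Fintype ι] [DecidableEq ι]
    (ℓ : ι → E →L[𝕜] 𝕜) (v : ι → E) (h : (Matrix.of fun i j => ℓ i (v j)).det ≠ 0) :
    LinearIndependent 𝕜 ℓ :=
  .of_comp (LinearMap.pi fun j => (ContinuousLinearMap.apply 𝕜 𝕜 (v j)).toLinearMap)
    (Matrix.linearIndependent_rows_of_det_ne_zero h)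

theorem fderiv_apply_eq_zero_of_eventually_eq {𝕜 E F : Type*} [NontriviallyNormedField 𝕜]
    [NormedAddCommGroup E] [NormedSpace 𝕜 E] [NormedAddCommGroup F] [NormedSpace 𝕜 F]
    {f : E → F} {x v : E} (hf : DifferentiableAt 𝕜 f x)
    (h : ∀ᶠ t : 𝕜 in nhds 0, f (x + t • v) = f x) : fderiv 𝕜 f x v = 0 := by
  rw [← hf.lineDeriv_eq_fderiv, lineDeriv, Filter.EventuallyEq.deriv_eq h, deriv_const]

theorem fderiv_pi_eval_apply {𝕜 ι : Type*} [NontriviallyNormedField 𝕜] [Fintype ι] (i : ι)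
    (z w : ι → 𝕜) : fderiv 𝕜 (fun z : ι → 𝕜 => z i) z w = w i := by
  rw [(hasFDerivAt_apply i z).fderiv, ContinuousLinearMap.proj_apply]

def qPart (z : Fin 4 → ℝ) : Fin 4 → ℝ := ![z 0, z 1, 0, 0]

theorem rlA1_eq : rlA1 = fun z => z 3 * angM z - z 0 / rr z := by
  funext z
  simp only [rlA1, psq, pdotq, angM]
  ring

theorem rlA2_eq : rlA2 = fun z => -(z 2 * angM z) - z 1 / rr z := by
  funext z
  simp only [rlA2, psq, pdotq, angM]
  ring

theorem rr_pos_of_angM_ne_zero {z : Fin 4 → ℝ} (hM : angM z ≠ 0) : 0 < rr z := by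
  refine Real.sqrt_pos.2 (lt_of_le_of_ne (by positivity) fun h => hM ?_)
  have h0 : z 0 = 0 := by nlinarith [sq_nonneg (z 0), sq_nonneg (z 1)]
  have h1 : z 1 = 0 := by nlinarith [sq_nonneg (z 0), sq_nonneg (z 1)]
  simp [angM, h0, h1]

theorem rr_add_smul_qPart (z : Fin 4 → ℝ) {t : ℝ} (ht : 0 ≤ 1 + t) :
    rr (z + t • qPart z) = (1 + t) * rr z := by
  have h : ((z + t • qPart z) 0) ^ 2 + ((z + t • qPart z) 1) ^ 2
      = (1 + t) ^ 2 * ((z 0) ^ 2 + (z 1) ^ 2) := by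
    simp only [qPart, Pi.add_apply, Pi.smul_apply, smul_eq_mul, Matrix.cons_val_zero,
      Matrix.cons_val_one]
    ring
  rw [rr, rr, h, Real.sqrt_mul (sq_nonneg _), Real.sqrt_sq ht]

theorem differentiableAt_div_rr {z : Fin 4 → ℝ} (hr : rr z ≠ 0) (i : Fin 4) :
    DifferentiableAt ℝ (fun z => z i / rr z) z := by
  have hs : (z 0) ^ 2 + (z 1) ^ 2 ≠ 0 := fun h => hr (by simp [rr, h])
  unfold rr
  fun_prop (disch := assumption)

@[fun_prop]
theorem differentiable_angM : Differentiable ℝ angM := by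
  unfold angM
  fun_prop

theorem fderiv_angM_apply (z w : Fin 4 → ℝ) :
    fderiv ℝ angM z w = z 0 * w 3 + z 3 * w 0 - z 1 * w 2 - z 2 * w 1 := by
  unfold angM
  rw [fderiv_fun_sub (by fun_prop) (by fun_prop), fderiv_fun_mul (by fun_prop) (by fun_prop),
    fderiv_fun_mul (by fun_prop) (by fun_prop)]
  simp only [sub_apply, add_apply, smul_apply, fderiv_pi_eval_apply, smul_eq_mul]
  ring

theorem fderiv_div_rr_single_eq_zero {z : Fin 4 → ℝ} (hr : rr z ≠ 0) {i j : Fin 4}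
    (hi : i = 0 ∨ i = 1) (hj : j = 2 ∨ j = 3) :
    fderiv ℝ (fun z => z i / rr z) z (Pi.single j 1) = 0 := by
  refine fderiv_apply_eq_zero_of_eventually_eq (differentiableAt_div_rr hr i)
    (.of_forall fun t => ?_)
  rcases hi with rfl | rfl <;> rcases hj with rfl | rfl <;> simp [rr]

theorem fderiv_div_rr_qPart_eq_zero {z : Fin 4 → ℝ} (hr : rr z ≠ 0) {i : Fin 4}
    (hi : i = 0 ∨ i = 1) :
    fderiv ℝ (fun z => z i / rr z) z (qPart z) = 0 := by
  refine fderiv_apply_eq_zero_of_eventually_eq (differentiableAt_div_rr hr i) ?_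
  filter_upwards [eventually_gt_nhds (show (-1 : ℝ) < 0 by norm_num)] with t ht
  have hcoord : (z + t • qPart z) i = (1 + t) * z i := by
    rcases hi with rfl | rfl <;>
      simp only [qPart, Pi.add_apply, Pi.smul_apply, smul_eq_mul, Matrix.cons_val_zero,
        Matrix.cons_val_one] <;> ring
  rw [hcoord, rr_add_smul_qPart z (by linarith), mul_div_mul_left _ _ (by linarith)]

theorem fderiv_rlA1_apply {z : Fin 4 → ℝ} (hr : rr z ≠ 0) (w : Fin 4 → ℝ) :
    fderiv ℝ rlA1 z w
      = z 3 * fderiv ℝ angM z w + angM z * w 3 - fderiv ℝ (fun z => z 0 / rr z) z w := by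
  rw [rlA1_eq, fderiv_fun_sub (by fun_prop) (differentiableAt_div_rr hr 0),
    fderiv_fun_mul (by fun_prop) (by fun_prop)]
  simp only [sub_apply, add_apply, smul_apply, fderiv_pi_eval_apply, smul_eq_mul]

theorem fderiv_rlA2_apply {z : Fin 4 → ℝ} (hr : rr z ≠ 0) (w : Fin 4 → ℝ) :
    fderiv ℝ rlA2 z w
      = -(z 2 * fderiv ℝ angM z w + angM z * w 2) - fderiv ℝ (fun z => z 1 / rr z) z w := by
  rw [rlA2_eq, fderiv_fun_sub (by fun_prop) (differentiableAt_div_rr hr 1), fderiv_fun_neg,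
    fderiv_fun_mul (by fun_prop) (by fun_prop)]
  simp only [sub_apply, add_apply, smul_apply, neg_apply, fderiv_pi_eval_apply, smul_eq_mul]

theorem det_kepler_differentials {z : Fin 4 → ℝ} (hr : rr z ≠ 0) :
    (Matrix.of fun i j => ![fderiv ℝ angM z, fderiv ℝ rlA1 z, fderiv ℝ rlA2 z] i
      (![Pi.single 2 1, Pi.single 3 1, qPart z] j)).det = angM z ^ 3 := by
  have hq₁ := fderiv_div_rr_qPart_eq_zero hr (i := 0) (.inl rfl)
  have hq₂ := fderiv_div_rr_qPart_eq_zero hr (i := 1) (.inr rfl)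
  have hq₁p₁ := fderiv_div_rr_single_eq_zero hr (i := 0) (j := 2) (.inl rfl) (.inl rfl)
  have hq₁p₂ := fderiv_div_rr_single_eq_zero hr (i := 0) (j := 3) (.inl rfl) (.inr rfl)
  have hq₂p₁ := fderiv_div_rr_single_eq_zero hr (i := 1) (j := 2) (.inr rfl) (.inl rfl)
  have hq₂p₂ := fderiv_div_rr_single_eq_zero hr (i := 1) (j := 3) (.inr rfl) (.inr rfl)
  simp only [Matrix.det_fin_three, Matrix.of_apply, Matrix.cons_val_zero, Matrix.cons_val_one,
    Matrix.cons_val_two, Matrix.head_cons, Matrix.tail_cons, fderiv_rlA1_apply hr,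
    fderiv_rlA2_apply hr, hq₁, hq₂, hq₁p₁, hq₁p₂, hq₂p₁, hq₂p₂, fderiv_angM_apply]
  simp only [qPart, angM, Pi.single_apply, Fin.reduceEq, ↓reduceIte, Matrix.cons_val]
  ring

/-- On `U = {M₁₂ ≠ 0}` the differentials `dM₁₂, dA₁, dA₂` are linearly independent,
i.e. `dM₁₂ ∧ dA₁ ∧ dA₂ ≠ 0` on `U`. -/
theorem kepler_integrals_independent_on_U :
    ∀ z : Fin 4 → ℝ, z ≠ 0 → angM z ≠ 0 →
      LinearIndependent ℝ ![fderiv ℝ angM z, fderiv ℝ rlA1 z, fderiv ℝ rlA2 z] := by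
  intro z _ hM
  refine linearIndependent_of_det_apply_ne_zero _ ![Pi.single 2 1, Pi.single 3 1, qPart z] ?_
  rw [det_kepler_differentials (rr_pos_of_angM_ne_zero hM).ne']
  exact pow_ne_zero 3 hM
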